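/- The twisted generalized Reed–Solomon code C_{k,1,k-1}(α,𝟏,η) is near MDS — that is, its minimum Hamming distance equals n-k and the minimum Hamming distance of its dual code C^⊥ equals k — if and only if there exists a subset I ⊆ {1,…,n} with |I| = k such that η·∑_{i∈I} α_i = -1. -/

import Mathlib

open Polynomial

/-- The set of `(k,1,ℓ,η)`-twisted polynomials:
`{ ∑_{i=0}^{k-1} a_i x^i + η a_ℓ x^k : a_i ∈ F }`. -/
def twistedSpace {F : Type*} [Field F] (k ℓ : ℕ) (hℓ : ℓ < k) (η : F) :
    Set (Polynomial F) :=
  {f | ∃ a : Fin k → F,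
    f = (∑ i : Fin k, Polynomial.C (a i) * Polynomial.X ^ (i : ℕ))
          + Polynomial.C (η * a ⟨ℓ, hℓ⟩) * Polynomial.X ^ k}

/-- The twisted generalized Reed–Solomon code `C_{k,1,ℓ}(α, 1, η)`. -/
def tgrsCode {F : Type*} [Field F] {n : ℕ} (k ℓ : ℕ) (hℓ : ℓ < k)
    (α : Fin n → F) (η : F) : Set (Fin n → F) :=
  {v | ∃ f ∈ twistedSpace k ℓ hℓ η, ∀ j, v j = f.eval (α j)}

/-- The dual code of a code `C ⊆ F^n`. -/
def dualCode {F : Type*} [Field F] {n : ℕ} (C : Set (Fin n → F)) :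
    Set (Fin n → F) :=
  {x | ∀ c ∈ C, ∑ i, x i * c i = 0}

/-!
A codeword is the evaluation vector of a polynomial `f` of degree at most `k` with
`f_k = η f_{k-1}`, so it has at most `k` zeros; and since the code contains every polynomial
of degree `< k - 1`, a dual codeword of weight `< k` would be orthogonal to the nodal
polynomial of its support minus one point, which is impossible.

If some codeword has exactly `k` zeros `I`, then `f = f_k ∏_{i ∈ I} (X - α_i)`, and comparing
the coefficients of `X^{k-1}` gives `f_{k-1} (1 + η ∑_{i ∈ I} α_i) = 0` with `f_{k-1} ≠ 0`.
Conversely, for such an `I` the polynomial `η ∏_{i ∈ I} (X - α_i)` lies in the space and has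
weight `n - k`, while the nodal weights of `I` form a dual codeword of weight `k`: they read off
the `X^{k-1}`-coefficient of `f - f_k ∏_{i ∈ I} (X - α_i)`, which is
`f_{k-1} (1 + η ∑_{i ∈ I} α_i) = 0`.
-/

open Finset Lagrange

section Polynomials

variable {F : Type*} [Field F]

theorem coeff_sum_fin_C_mul_X_pow {k : ℕ} (a : Fin k → F) (m : ℕ) :
    (∑ i : Fin k, C (a i) * X ^ (i : ℕ)).coeff m = if h : m < k then a ⟨m, h⟩ else 0 := by
  simp only [finsetSum_coeff, coeff_C_mul_X_pow]
  split_ifs with h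
  · rw [Fintype.sum_eq_single ⟨m, h⟩ fun i hi => if_neg fun hm => hi (Fin.ext hm.symm)]
    exact if_pos rfl
  · exact Fintype.sum_eq_zero _ fun i => if_neg (by omega)

theorem mem_twistedSpace_iff {k ℓ : ℕ} (hℓ : ℓ < k) {η : F} {f : F[X]} :
    f ∈ twistedSpace k ℓ hℓ η ↔ f.natDegree ≤ k ∧ f.coeff k = η * f.coeff ℓ := by
  have coeff_eq (a : Fin k → F) (m : ℕ) :
      ((∑ i : Fin k, C (a i) * X ^ (i : ℕ)) + C (η * a ⟨ℓ, hℓ⟩) * X ^ k).coeff m =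
        if h : m < k then a ⟨m, h⟩ else if m = k then η * a ⟨ℓ, hℓ⟩ else 0 := by
    rw [coeff_add, coeff_sum_fin_C_mul_X_pow, coeff_C_mul_X_pow]
    split_ifs <;> first | omega | simp
  constructor
  · rintro ⟨a, rfl⟩
    refine ⟨natDegree_le_iff_coeff_eq_zero.mpr fun m hm => ?_, ?_⟩
    · rw [coeff_eq, dif_neg (by omega), if_neg (by omega)]
    · rw [coeff_eq, coeff_eq, dif_neg (lt_irrefl k), if_pos rfl, dif_pos hℓ]
  · rintro ⟨hdeg, hcoeff⟩
    refine ⟨fun i => f.coeff i, ext fun m => ?_⟩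
    rw [coeff_eq]
    split_ifs with hmk hmk'
    · rfl
    · rw [hmk', hcoeff]
    · exact coeff_eq_zero_of_natDegree_lt (by omega)

end Polynomials

section Nodal

variable {F : Type*} [Field F] {ι : Type*} {s : Finset ι} {v : ι → F}

theorem coeff_nodal_card : (nodal s v).coeff #s = 1 := by
  rw [← natDegree_nodal (v := v)]
  exact nodal_monic.coeff_natDegree

theorem card_le_natDegree_of_eval_eq_zero (hvs : Set.InjOn v s) {f : F[X]} (hf : f ≠ 0)
    (h0 : ∀ i ∈ s, f.eval (v i) = 0) : #s ≤ f.natDegree := by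
  by_contra! hlt
  exact hf (eq_zero_of_degree_lt_of_eval_index_eq_zero s hvs
    (degree_le_natDegree.trans_lt (by exact_mod_cast hlt)) h0)

theorem degree_sub_C_mul_nodal_lt {f : F[X]} (hf : f.natDegree ≤ #s) :
    (f - C (f.coeff #s) * nodal s v).degree < #s := by
  refine (degree_lt_iff_coeff_zero _ _).mpr fun m hm => ?_
  rw [coeff_sub, coeff_C_mul]
  rcases (show #s ≤ m by exact_mod_cast hm).eq_or_lt with rfl | hlt
  · rw [coeff_nodal_card, mul_one, sub_self]
  · have hnodal : (nodal s v).natDegree < m := by rwa [natDegree_nodal]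
    rw [coeff_eq_zero_of_natDegree_lt (hf.trans_lt hlt), coeff_eq_zero_of_natDegree_lt hnodal,
      mul_zero, sub_zero]

theorem eq_C_mul_nodal_of_eval_eq_zero (hvs : Set.InjOn v s) {f : F[X]} (hf : f.natDegree ≤ #s)
    (h0 : ∀ i ∈ s, f.eval (v i) = 0) : f = C (f.coeff #s) * nodal s v :=
  eq_of_degree_sub_lt_of_eval_index_eq s hvs (degree_sub_C_mul_nodal_lt hf) fun i hi => by
    rw [h0 i hi, eval_mul, eval_nodal_at_node hi, mul_zero]

theorem coeff_nodal_card_pred (hs : s.Nonempty) :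
    (nodal s v).coeff (#s - 1) = -∑ i ∈ s, v i := by
  rw [nodal_eq]
  exact prod_X_sub_C_coeff_card_pred s v hs.card_pos

theorem sum_nodalWeight_mul_eval [DecidableEq ι] (hvs : Set.InjOn v s) {f : F[X]}
    (hf : f.degree < #s) : ∑ i ∈ s, nodalWeight s v i * f.eval (v i) = f.coeff (#s - 1) := by
  rw [coeff_eq_sum hvs hf]
  refine sum_congr rfl fun i _ => ?_
  rw [nodalWeight, prod_inv_distrib, div_eq_inv_mul]

end Nodal

theorem hammingNorm_add_card_filter_eq_zero {ι β : Type*} [Fintype ι] [Zero β] [DecidableEq β]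
    (v : ι → β) : hammingNorm v + #{i | v i = 0} = Fintype.card ι := by
  rw [hammingNorm, add_comm]
  exact card_filter_add_card_filter_not _

section Code

variable {F : Type*} [Field F] [DecidableEq F] {n k ℓ : ℕ} {α : Fin n → F} {η : F}

theorem sub_le_hammingNorm_of_mem_tgrsCode (hα : Function.Injective α) {hℓ : ℓ < k}
    {v : Fin n → F} (hv : v ∈ tgrsCode k ℓ hℓ α η) (hv0 : v ≠ 0) :
    n - k ≤ hammingNorm v := by
  obtain ⟨f, hf, hfv⟩ := hv
  obtain rfl : v = fun j => f.eval (α j) := funext hfv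
  have hf0 : f ≠ 0 := by
    rintro rfl
    exact hv0 (funext fun j => eval_zero)
  have hzeros : #{j | f.eval (α j) = 0} ≤ k :=
    (card_le_natDegree_of_eval_eq_zero hα.injOn hf0 fun j hj => (mem_filter.1 hj).2).trans
      ((mem_twistedSpace_iff hℓ).1 hf).1
  have := hammingNorm_add_card_filter_eq_zero fun j => f.eval (α j)
  rw [Fintype.card_fin] at this
  omega

theorem lt_hammingNorm_of_sum_mul_eval_eq_zero (hα : Function.Injective α) {d : ℕ}
    {x : Fin n → F} (hx : ∀ p : F[X], p.degree < d → ∑ i, x i * p.eval (α i) = 0)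
    (hx0 : x ≠ 0) : d < hammingNorm x := by
  by_contra! hle
  obtain ⟨i₀, hi₀⟩ := Function.ne_iff.mp hx0
  set S : Finset (Fin n) := {i | x i ≠ 0}
  have hi₀S : i₀ ∈ S := mem_filter.2 ⟨mem_univ _, hi₀⟩
  have hdeg : (nodal (S.erase i₀) α).degree < d := by
    rw [degree_nodal, card_erase_of_mem hi₀S]
    exact_mod_cast (Nat.sub_lt (card_pos.2 ⟨i₀, hi₀S⟩) one_pos).trans_le hle
  have hsum := hx _ hdeg
  rw [Fintype.sum_eq_single i₀ fun j hj => ?_] at hsum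
  · refine mul_ne_zero hi₀ (eval_nodal_not_at_node fun j hj => ?_) hsum
    exact fun h => (mem_erase.1 hj).1 (hα h).symm
  · by_cases hxj : x j = 0
    · rw [hxj, zero_mul]
    · rw [eval_nodal_at_node (mem_erase.2 ⟨hj, mem_filter.2 ⟨mem_univ _, hxj⟩⟩), mul_zero]

theorem le_hammingNorm_of_mem_dualCode_tgrsCode (hα : Function.Injective α) {hℓ : k - 1 < k}
    {x : Fin n → F} (hx : x ∈ dualCode (tgrsCode k (k - 1) hℓ α η)) (hx0 : x ≠ 0) :
    k ≤ hammingNorm x := by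
  suffices k - 1 < hammingNorm x by omega
  refine lt_hammingNorm_of_sum_mul_eval_eq_zero hα (fun p hp => ?_) hx0
  have hpk : p.degree < k := hp.trans_le (by exact_mod_cast Nat.sub_le k 1)
  refine hx _ ⟨p, (mem_twistedSpace_iff hℓ).2 ⟨natDegree_le_of_degree_le hpk.le, ?_⟩,
    fun j => rfl⟩
  rw [coeff_eq_zero_of_degree_lt hp, coeff_eq_zero_of_degree_lt hpk, mul_zero]

theorem exists_mul_sum_eq_neg_one_of_mem_tgrsCode (hkn : k < n) (hα : Function.Injective α)
    {hℓ : k - 1 < k} {v : Fin n → F} (hv : v ∈ tgrsCode k (k - 1) hℓ α η)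
    (hw : hammingNorm v = n - k) :
    ∃ I : Finset (Fin n), #I = k ∧ η * ∑ i ∈ I, α i = -1 := by
  obtain ⟨f, hf, hfv⟩ := hv
  obtain rfl : v = fun j => f.eval (α j) := funext hfv
  obtain ⟨hdeg, htwist⟩ := (mem_twistedSpace_iff hℓ).1 hf
  have hcard := hammingNorm_add_card_filter_eq_zero fun j => f.eval (α j)
  set Z : Finset (Fin n) := {j | f.eval (α j) = 0}
  have hZ : #Z = k := by
    rw [Fintype.card_fin] at hcard
    omega
  subst hZ
  have hf_eq := eq_C_mul_nodal_of_eval_eq_zero hα.injOn hdeg fun j hj => (mem_filter.1 hj).2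
  have hlead : f.coeff #Z ≠ 0 := by
    intro h0
    rw [h0, C_0, zero_mul] at hf_eq
    have : Z = univ := eq_univ_of_forall fun j => mem_filter.2 ⟨mem_univ _, by simp [hf_eq]⟩
    rw [this, card_univ, Fintype.card_fin] at hkn
    exact lt_irrefl _ hkn
  have hsub : f.coeff (#Z - 1) = f.coeff #Z * -∑ i ∈ Z, α i := by
    conv_lhs => rw [hf_eq]
    rw [coeff_C_mul, coeff_nodal_card_pred (card_pos.1 (by omega))]
  refine ⟨Z, rfl, eq_neg_of_add_eq_zero_left ?_⟩
  have key : f.coeff #Z * (η * ∑ i ∈ Z, α i + 1) = 0 := by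
    linear_combination htwist + η * hsub
  exact (mul_eq_zero.1 key).resolve_left hlead

theorem exists_mem_tgrsCode_hammingNorm_eq (hkn : k < n) (hα : Function.Injective α)
    {hℓ : k - 1 < k} {I : Finset (Fin n)} (hI : #I = k) (hsum : η * ∑ i ∈ I, α i = -1) :
    ∃ v ∈ tgrsCode k (k - 1) hℓ α η, v ≠ 0 ∧ hammingNorm v = n - k := by
  subst hI
  have hη : η ≠ 0 := left_ne_zero_of_mul (hsum ▸ neg_ne_zero.2 one_ne_zero)
  set f : F[X] := C η * nodal I α
  have hzeros : ({j | f.eval (α j) = 0} : Finset (Fin n)) = I := by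
    ext j
    simp [f, eval_nodal, hη, prod_eq_zero_iff, sub_eq_zero, hα.eq_iff]
  have hw : hammingNorm (fun j => f.eval (α j)) = n - #I := by
    have := hammingNorm_add_card_filter_eq_zero fun j => f.eval (α j)
    rw [hzeros, Fintype.card_fin] at this
    omega
  refine ⟨_, ⟨f, (mem_twistedSpace_iff hℓ).2 ⟨?_, ?_⟩, fun j => rfl⟩,
    hammingNorm_ne_zero_iff.1 (by omega), hw⟩
  · exact (natDegree_C_mul_le _ _).trans natDegree_nodal.le
  · rw [coeff_C_mul, coeff_C_mul, coeff_nodal_card, coeff_nodal_card_pred (card_pos.1 (by omega))]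
    linear_combination η * hsum

theorem exists_mem_dualCode_tgrsCode_hammingNorm_eq (hα : Function.Injective α)
    {hℓ : k - 1 < k} {I : Finset (Fin n)} (hI : #I = k) (hsum : η * ∑ i ∈ I, α i = -1) :
    ∃ x ∈ dualCode (tgrsCode k (k - 1) hℓ α η), x ≠ 0 ∧ hammingNorm x = k := by
  subst hI
  set x : Fin n → F := fun i => if i ∈ I then nodalWeight I α i else 0
  have hsupp : ({i | x i ≠ 0} : Finset (Fin n)) = I := by
    ext i
    simpa [x] using nodalWeight_ne_zero hα.injOn
  refine ⟨x, ?_, hammingNorm_ne_zero_iff.1 ?_, by rw [hammingNorm, hsupp]⟩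
  · rintro c ⟨f, hf, hfc⟩
    obtain ⟨hdeg, htwist⟩ := (mem_twistedSpace_iff hℓ).1 hf
    set q : F[X] := f - C (f.coeff #I) * nodal I α
    have hq_eval : ∀ i ∈ I, q.eval (α i) = f.eval (α i) := fun i hi => by
      rw [eval_sub, eval_mul, eval_nodal_at_node hi, mul_zero, sub_zero]
    have hq_coeff : q.coeff (#I - 1) = f.coeff (#I - 1) * (1 + η * ∑ i ∈ I, α i) := by
      rw [coeff_sub, coeff_C_mul, coeff_nodal_card_pred (card_pos.1 (by omega)), htwist]
      ring
    calc ∑ i, x i * c i = ∑ i ∈ I, nodalWeight I α i * q.eval (α i) := by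
          simp only [x, hfc, ite_mul, zero_mul, sum_ite_mem, univ_inter]
          exact sum_congr rfl fun i hi => by rw [hq_eval i hi]
      _ = q.coeff (#I - 1) := sum_nodalWeight_mul_eval hα.injOn (degree_sub_C_mul_nodal_lt hdeg)
      _ = 0 := by rw [hq_coeff, hsum, add_neg_cancel, mul_zero]
  · rw [hammingNorm, hsupp]
    omega

end Code

theorem tgrs_nmds_iff_general {F : Type*} [Field F] [DecidableEq F] {n k : ℕ}
    (hk : 1 ≤ k) (hkn : k < n)
    (α : Fin n → F) (hα : Function.Injective α) (η : F) :
    (IsLeast {w : ℕ | ∃ v ∈ tgrsCode k (k - 1) (Nat.sub_lt hk Nat.one_pos) α η,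
          v ≠ 0 ∧ hammingNorm v = w} (n - k)
      ∧ IsLeast {w : ℕ |
          ∃ v ∈ dualCode (tgrsCode k (k - 1) (Nat.sub_lt hk Nat.one_pos) α η),
          v ≠ 0 ∧ hammingNorm v = w} k)
      ↔ ∃ I : Finset (Fin n), I.card = k ∧ η * ∑ i ∈ I, α i = -1 := by
  constructor
  · rintro ⟨⟨⟨v, hv, -, hw⟩, -⟩, -⟩
    exact exists_mul_sum_eq_neg_one_of_mem_tgrsCode hkn hα hv hw
  · rintro ⟨I, hI, hsum⟩
    refine ⟨⟨exists_mem_tgrsCode_hammingNorm_eq hkn hα hI hsum, ?_⟩,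
      exists_mem_dualCode_tgrsCode_hammingNorm_eq hα hI hsum, ?_⟩
    · rintro w ⟨v, hv, hv0, rfl⟩
      exact sub_le_hammingNorm_of_mem_tgrsCode hα hv hv0
    · rintro w ⟨x, hx, hx0, rfl⟩
      exact le_hammingNorm_of_mem_dualCode_tgrsCode hα hx hx0

/-- `C_{k,1,k-1}(α,1,η)` is near MDS — its minimum Hamming distance is `n - k` and
the minimum Hamming distance of its dual is `k` — iff `η ∑_{i∈I} α_i = -1` for
some `k`-subset `I`. -/
theorem tgrs_nmds_iff {F : Type*} [Field F] [DecidableEq F] {n k : ℕ}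
    (hk : 1 ≤ k) (hkn : k < n)
    (α : Fin n → F) (hα : Function.Injective α) (η : F) (hη : η ≠ 0) :
    (IsLeast {w : ℕ | ∃ v ∈ tgrsCode k (k - 1) (Nat.sub_lt hk Nat.one_pos) α η,
          v ≠ 0 ∧ hammingNorm v = w} (n - k)
      ∧ IsLeast {w : ℕ |
          ∃ v ∈ dualCode (tgrsCode k (k - 1) (Nat.sub_lt hk Nat.one_pos) α η),
          v ≠ 0 ∧ hammingNorm v = w} k)
      ↔ ∃ I : Finset (Fin n), I.card = k ∧ η * ∑ i ∈ I, α i = -1 :=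
  tgrs_nmds_iff_general hk hkn α hα η
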